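/- arXiv:2405.20406 — 2 statements merged into one kernel-verified Lean document; each statement's English description precedes it below -/
import Mathlib

section
/- Let (S,s) be a finite bijective set-theoretic solution to the Pentagon Equation. Define t : S × S → S × S by t(x,y) = (x∘y, ψ_x(y)), where x∘y is the second component and ψ_x(y) the first component of s⁻¹(y,x). Then (S,t) is a finite bijective set-theoretic solution to the Pentagon Equation; in particular (S,∘) is a left group, i.e. there exist a nonempty set E', a group G', and a bijection f : S → E' × G' with f(x∘y) = ((f x)₁, (f x)₂ (f y)₂) for all x,y ∈ S. -/
namespace PE

/-- `s` applied to components 1,2 of a triple. -/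
def s12 {S : Type*} (s : S × S → S × S) : S × S × S → S × S × S :=
  fun p => ((s (p.1, p.2.1)).1, (s (p.1, p.2.1)).2, p.2.2)

/-- `s` applied to components 1,3 of a triple. -/
def s13 {S : Type*} (s : S × S → S × S) : S × S × S → S × S × S :=
  fun p => ((s (p.1, p.2.2)).1, p.2.1, (s (p.1, p.2.2)).2)

/-- `s` applied to components 2,3 of a triple. -/
def s23 {S : Type*} (s : S × S → S × S) : S × S × S → S × S × S :=
  fun p => (p.1, s (p.2.1, p.2.2))

/-- `(S, s)` is a set-theoretic solution to the Pentagon Equation: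
`s₂₃ ∘ s₁₃ ∘ s₁₂ = s₁₂ ∘ s₂₃`. -/
def IsPE {S : Type*} (s : S × S → S × S) : Prop :=
  s23 s ∘ s13 s ∘ s12 s = s12 s ∘ s23 s

/-- The induced binary operation `x · y`: the first component of `s (x, y)`. -/
def mul {S : Type*} (s : S × S → S × S) (x y : S) : S := (s (x, y)).1

/-- The map `θ_x`: `theta s x y = θ_x(y)` is the second component of `s (x, y)`. -/
def theta {S : Type*} (s : S × S → S × S) (x y : S) : S := (s (x, y)).2

/-- The operation `x ∘ y`: the second component of `s⁻¹ (y, x)`. -/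
def circ {S : Type*} (sinv : S × S → S × S) (x y : S) : S := (sinv (y, x)).2

/-- The map `ψ_x`: `psi sinv x y = ψ_x(y)` is the first component of `s⁻¹ (y, x)`. -/
def psi {S : Type*} (sinv : S × S → S × S) (x y : S) : S := (sinv (y, x)).1

section Basic

variable {S : Type*}

/-- associativity of the induced multiplication -/
lemma pe_assoc (u : S × S → S × S) (hPE : IsPE u) :
    ∀ x y z : S, mul u (mul u x y) z = mul u x (mul u y z) := by
  intro x y z
  have h := congrFun hPE (x, y, z)
  simp only [Function.comp_apply, s12, s13, s23] at h
  exact congrArg (fun r : S × S × S => r.1) h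

/-- relation (B) -/
lemma pe_B (u : S × S → S × S) (hPE : IsPE u) :
    ∀ x y z : S, mul u (theta u x y) (theta u (mul u x y) z) = theta u x (mul u y z) := by
  intro x y z
  have h := congrFun hPE (x, y, z)
  simp only [Function.comp_apply, s12, s13, s23] at h
  exact congrArg (fun r : S × S × S => r.2.1) h

variable (u uinv : S × S → S × S)

/-- the dual (inverse-derived) solution `t` -/
def dual : S × S → S × S := fun p => (circ uinv p.1 p.2, psi uinv p.1 p.2)

variable (h₁ : ∀ p, uinv (u p) = p) (h₂ : ∀ p, u (uinv p) = p)

section InvLemmas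
include h₁ h₂

lemma s12_ri : ∀ q, s12 u (s12 uinv q) = q := by
  intro q
  show ((u ((uinv (q.1, q.2.1)).1, (uinv (q.1, q.2.1)).2)).1,
        (u ((uinv (q.1, q.2.1)).1, (uinv (q.1, q.2.1)).2)).2, q.2.2) = q
  rw [show ((uinv (q.1, q.2.1)).1, (uinv (q.1, q.2.1)).2) = uinv (q.1, q.2.1) from rfl, h₂]

lemma s12_li : ∀ q, s12 uinv (s12 u q) = q := s12_ri uinv u h₂ h₁

lemma s13_ri : ∀ q, s13 u (s13 uinv q) = q := by
  intro q
  show ((u ((uinv (q.1, q.2.2)).1, (uinv (q.1, q.2.2)).2)).1, q.2.1,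
        (u ((uinv (q.1, q.2.2)).1, (uinv (q.1, q.2.2)).2)).2) = q
  rw [show ((uinv (q.1, q.2.2)).1, (uinv (q.1, q.2.2)).2) = uinv (q.1, q.2.2) from rfl, h₂]

lemma s13_li : ∀ q, s13 uinv (s13 u q) = q := s13_ri uinv u h₂ h₁

lemma s23_ri : ∀ q, s23 u (s23 uinv q) = q := by
  intro q
  show (q.1, u ((uinv (q.2.1, q.2.2)).1, (uinv (q.2.1, q.2.2)).2)) = q
  rw [show ((uinv (q.2.1, q.2.2)).1, (uinv (q.2.1, q.2.2)).2) = uinv (q.2.1, q.2.2) from rfl, h₂]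

lemma s23_li : ∀ q, s23 uinv (s23 u q) = q := s23_ri uinv u h₂ h₁

end InvLemmas

/-- the inverse Pentagon equation -/
lemma inv_PE (h₁ : ∀ p, uinv (u p) = p) (h₂ : ∀ p, u (uinv p) = p) (hPE : IsPE u) :
    ∀ q, s12 uinv (s13 uinv (s23 uinv q)) = s23 uinv (s12 uinv q) := by
  intro q
  have key2 : s23 u (s13 u (s12 u (s23 uinv (s12 uinv q)))) = q := by
    have h := congrFun hPE (s23 uinv (s12 uinv q))
    simp only [Function.comp_apply] at h
    rw [h, s23_ri u uinv h₁ h₂, s12_ri u uinv h₁ h₂]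
  calc s12 uinv (s13 uinv (s23 uinv q))
      = s12 uinv (s13 uinv (s23 uinv (s23 u (s13 u (s12 u (s23 uinv (s12 uinv q))))))) := by
        rw [key2]
    _ = s23 uinv (s12 uinv q) := by
        rw [s23_li u uinv h₁ h₂, s13_li u uinv h₁ h₂, s12_li u uinv h₁ h₂]

def rev : S × S × S → S × S × S := fun q => (q.2.2, q.2.1, q.1)

lemma rev_rev : ∀ q : S × S × S, rev (rev q) = q := fun _ => rfl

lemma c12 : ∀ q, s12 (dual uinv) q = rev (s23 uinv (rev q)) := fun _ => rfl
lemma c23 : ∀ q, s23 (dual uinv) q = rev (s12 uinv (rev q)) := fun _ => rfl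
lemma c13 : ∀ q, s13 (dual uinv) q = rev (s13 uinv (rev q)) := fun _ => rfl

/-- the dual of a bijective solution is a solution -/
theorem dual_PE (h₁ : ∀ p, uinv (u p) = p) (h₂ : ∀ p, u (uinv p) = p) (hPE : IsPE u) :
    IsPE (dual uinv) := by
  funext q
  simp only [Function.comp_apply]
  rw [c12, c13, c23, c23, c12, rev_rev, rev_rev, rev_rev,
    inv_PE u uinv h₁ h₂ hPE (rev q)]

def dualinv : S × S → S × S := fun p => ((u (p.2, p.1)).2, (u (p.2, p.1)).1)

lemma dual_inv₁ (h₂ : ∀ p, u (uinv p) = p) : ∀ p, dualinv u (dual uinv p) = p := by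
  intro p
  show ((u ((uinv (p.2, p.1)).1, (uinv (p.2, p.1)).2)).2,
        (u ((uinv (p.2, p.1)).1, (uinv (p.2, p.1)).2)).1) = p
  rw [show ((uinv (p.2, p.1)).1, (uinv (p.2, p.1)).2) = uinv (p.2, p.1) from rfl, h₂]

lemma dual_inv₂ (h₁ : ∀ p, uinv (u p) = p) : ∀ p, dual uinv (dualinv u p) = p := by
  intro p
  show ((uinv ((u (p.2, p.1)).1, (u (p.2, p.1)).2)).2,
        (uinv ((u (p.2, p.1)).1, (u (p.2, p.1)).2)).1) = p
  rw [show ((u (p.2, p.1)).1, (u (p.2, p.1)).2) = u (p.2, p.1) from rfl, h₁]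

/-- the dual solution is bijective -/
theorem dual_bij (h₁ : ∀ p, uinv (u p) = p) (h₂ : ∀ p, u (uinv p) = p) :
    Function.Bijective (dual uinv) :=
  Function.bijective_iff_has_inverse.mpr
    ⟨dualinv u, dual_inv₁ u uinv h₂, dual_inv₂ u uinv h₁⟩

end Basic

section Classes

variable {S : Type*} [Fintype S]
variable (u uinv : S × S → S × S)

/-- the "class" `S·y` as a finset -/
noncomputable def LC (y : S) : Finset S :=
  @Finset.filter _ (fun x => ∃ p, mul u p y = x) (Classical.decPred _) Finset.univ

variable {u}

lemma mem_LC {x y : S} : x ∈ LC u y ↔ ∃ p, mul u p y = x := by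
  simp [LC]

lemma mul_mem_LC (p y : S) : mul u p y ∈ LC u y := mem_LC.mpr ⟨p, rfl⟩

lemma LC_nonempty (y : S) : (LC u y).Nonempty := ⟨mul u y y, mul_mem_LC y y⟩

variable (hassoc : ∀ x y z : S, mul u (mul u x y) z = mul u x (mul u y z))

include hassoc in
lemma LC_subset {x y : S} (hx : x ∈ LC u y) : LC u x ⊆ LC u y := by
  obtain ⟨p, rfl⟩ := mem_LC.mp hx
  intro z hz
  obtain ⟨q, rfl⟩ := mem_LC.mp hz
  exact mem_LC.mpr ⟨mul u q p, hassoc q p y⟩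

variable (h₁ : ∀ p, uinv (u p) = p) (h₂ : ∀ p, u (uinv p) = p)

include h₁ h₂ in
/-- counting: a stable class is closed under right division -/
lemma closure_of_stable (V : Finset S) (hV : ∀ v ∈ V, LC u v = V)
    (x z : S) (hxz : mul u x z ∈ V) : z ∈ V := by
  classical
  set A : Finset (S × S) := Finset.univ.filter (fun p : S × S => mul u p.1 p.2 ∈ V) with hA
  set B : Finset (S × S) := Finset.univ ×ˢ V with hB
  have hBA : B ⊆ A := by
    intro p hp
    have hp2 : p.2 ∈ V := (Finset.mem_product.mp hp).2
    have : mul u p.1 p.2 ∈ LC u p.2 := mul_mem_LC p.1 p.2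
    rw [hV p.2 hp2] at this
    simp [hA, this]
  have hcardA : A.card = (V ×ˢ (Finset.univ : Finset S)).card := by
    apply Finset.card_bij (fun p _ => u p)
    · intro a ha
      have : mul u a.1 a.2 ∈ V := by simpa [hA] using ha
      exact Finset.mem_product.mpr ⟨this, Finset.mem_univ _⟩
    · intro a ha b hb hab
      have := congrArg uinv hab
      rwa [h₁, h₁] at this
    · intro q hq
      refine ⟨uinv q, ?_, by rw [h₂]⟩
      have hq1 : q.1 ∈ V := (Finset.mem_product.mp hq).1
      have : mul u (uinv q).1 (uinv q).2 = q.1 := by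
        show (u ((uinv q).1, (uinv q).2)).1 = q.1
        rw [show ((uinv q).1, (uinv q).2) = uinv q from rfl, h₂]
      simp [hA, this, hq1]
  have hcards : A.card ≤ B.card := by
    rw [hcardA, hB, Finset.card_product, Finset.card_product, mul_comm]
  have hAB : B = A := Finset.eq_of_subset_of_card_le hBA hcards
  have : (x, z) ∈ A := by simp [hA, hxz]
  rw [← hAB] at this
  exact (Finset.mem_product.mp this).2

include hassoc h₁ h₂ in
/-- master lemma: every class is stable, reflexive and closed -/
lemma LC_master (y : S) :
    y ∈ LC u y ∧ (∀ v ∈ LC u y, LC u v = LC u y) ∧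
      (∀ x z : S, mul u x z ∈ LC u y → z ∈ LC u y) := by
  classical
  -- pick the minimal class below y
  obtain ⟨u₀, hu₀mem, hu₀min⟩ :=
    Finset.exists_min_image (LC u y) (fun v => (LC u v).card) (LC_nonempty y)
  set V := LC u u₀ with hVdef
  have hstable : ∀ v ∈ V, LC u v = V := by
    intro v hv
    have hsub : LC u v ⊆ V := LC_subset hassoc hv
    have hvy : v ∈ LC u y := LC_subset hassoc hu₀mem hv
    exact Finset.eq_of_subset_of_card_le hsub (hu₀min v hvy)
  have hclosed : ∀ x z : S, mul u x z ∈ V → z ∈ V :=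
    closure_of_stable uinv h₁ h₂ V hstable
  -- y belongs to V
  have hyV : y ∈ V := by
    obtain ⟨w, hw⟩ := LC_nonempty u₀
    have hwy : w ∈ LC u y := LC_subset hassoc hu₀mem hw
    obtain ⟨p, hp⟩ := mem_LC.mp hwy
    exact hclosed p y (by rw [hp]; exact hw)
  have hVy : LC u y = V := hstable y hyV
  refine ⟨hVy ▸ hyV, ?_, ?_⟩
  · intro v hv; rw [hVy] at hv ⊢; exact hstable v hv
  · intro x z h; rw [hVy] at h ⊢; exact hclosed x z h

end Classes

section Classes2

variable {S : Type*} [Fintype S]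
variable {u : S × S → S × S} (uinv : S × S → S × S)
variable (hassoc : ∀ x y z : S, mul u (mul u x y) z = mul u x (mul u y z))
variable (h₁ : ∀ p, uinv (u p) = p) (h₂ : ∀ p, u (uinv p) = p)

include hassoc h₁ h₂

lemma LC_refl (y : S) : y ∈ LC u y := (LC_master uinv hassoc h₁ h₂ y).1

lemma LC_stable {v y : S} (hv : v ∈ LC u y) : LC u v = LC u y :=
  (LC_master uinv hassoc h₁ h₂ y).2.1 v hv

lemma LC_closure {x z y : S} (h : mul u x z ∈ LC u y) : z ∈ LC u y :=
  (LC_master uinv hassoc h₁ h₂ y).2.2 x z h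

/-- cancellation of right translations within a class -/
lemma LC_cancel {q q' w y : S} (hq : q ∈ LC u y) (hq' : q' ∈ LC u y)
    (h : mul u q w = mul u q' w) : q = q' := by
  classical
  set v := mul u w y with hv
  have hvy : v ∈ LC u y := mul_mem_LC w y
  have hLCv : LC u v = LC u y := LC_stable uinv hassoc h₁ h₂ hvy
  -- the map q ↦ q·v is surjective from LC y to LC y
  have hsurj : ∀ w' ∈ LC u y, ∃ r, ∃ _ : r ∈ LC u y, mul u r v = w' := by
    intro w' hw'
    have hvv : mul u v v ∈ LC u v := mul_mem_LC v v
    have : LC u (mul u v v) = LC u y := by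
      rw [LC_stable uinv hassoc h₁ h₂ hvv, hLCv]
    rw [← this] at hw'
    obtain ⟨r, hr⟩ := mem_LC.mp hw'
    refine ⟨mul u r v, ?_, by rw [hassoc]; exact hr⟩
    rw [← hLCv]; exact mul_mem_LC r v
  have hmaps : ∀ (r : S) (_ : r ∈ LC u y), mul u r v ∈ LC u y := by
    intro r _
    rw [← hLCv]; exact mul_mem_LC r v
  have hinj := Finset.inj_on_of_surj_on_of_card_le (s := LC u y) (t := LC u y)
    (fun r _ => mul u r v) hmaps
    (by intro b hb; obtain ⟨r, hr, hrr⟩ := hsurj b hb; exact ⟨r, hr, hrr⟩)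
    le_rfl
  have h' : mul u q v = mul u q' v := by
    rw [hv, ← hassoc, ← hassoc, h]
  exact hinj hq hq' h'

/-- cross-class surjectivity: right translation to an element of another class -/
lemma LC_crosssurj {e x : S} (he : e ∈ LC u e) :
    ∃ p ∈ LC u x, mul u p e = e := by
  classical
  have hmaps1 : ∀ (p : S) (_ : p ∈ LC u x), mul u p e ∈ LC u e :=
    fun p _ => mul_mem_LC p e
  have hmaps2 : ∀ (q : S) (_ : q ∈ LC u e), mul u q x ∈ LC u x :=
    fun q _ => mul_mem_LC q x
  have hinj1 : Set.InjOn (fun p => mul u p e) (LC u x) := by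
    intro p hp p' hp' h
    exact LC_cancel uinv hassoc h₁ h₂ (by simpa using hp) (by simpa using hp') h
  have hinj2 : Set.InjOn (fun q => mul u q x) (LC u e) := by
    intro p hp p' hp' h
    exact LC_cancel uinv hassoc h₁ h₂ (by simpa using hp) (by simpa using hp') h
  have hc1 : (LC u x).card ≤ (LC u e).card :=
    Finset.card_le_card_of_injOn _ (fun p hp => hmaps1 p hp) hinj1
  have hc2 : (LC u e).card ≤ (LC u x).card :=
    Finset.card_le_card_of_injOn _ (fun q hq => hmaps2 q hq) hinj2
  have hsurj := Finset.surj_on_of_inj_on_of_card_le (s := LC u x) (t := LC u e)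
    (fun p _ => mul u p e) hmaps1
    (fun a₁ a₂ ha₁ ha₂ h => hinj1 (by simpa using ha₁) (by simpa using ha₂) h)
    hc2
  obtain ⟨p, hp, hpe⟩ := hsurj e he
  exact ⟨p, hp, hpe.symm⟩

/-- the circle operation lands in the class: `a ∘ w ∈ S·w` -/
lemma LC_circlink (a w : S) : (uinv (w, a)).2 ∈ LC u w := by
  have hu : u (uinv (w, a)) = (w, a) := h₂ _
  have hm : mul u (uinv (w, a)).1 (uinv (w, a)).2 = w := by
    show (u ((uinv (w, a)).1, (uinv (w, a)).2)).1 = w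
    rw [show ((uinv (w, a)).1, (uinv (w, a)).2) = uinv (w, a) from rfl, hu]
  exact LC_closure uinv hassoc h₁ h₂
    (by rw [hm]; exact LC_refl uinv hassoc h₁ h₂ w)

end Classes2

section Pow

variable {S : Type*}
variable {m : S → S → S} (hassoc : ∀ x y z : S, m (m x y) z = m x (m y z))

/-- iterated powers -/
def pw (m : S → S → S) (x : S) : ℕ → S
  | 0 => x
  | n + 1 => m (pw m x n) x

include hassoc in
lemma pw_add (x : S) : ∀ a b : ℕ, pw m x (a + b + 1) = m (pw m x a) (pw m x b) := by
  intro a b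
  induction b with
  | zero => rfl
  | succ b ih =>
      show pw m x ((a + b + 1) + 1) = m (pw m x a) (m (pw m x b) x)
      rw [pw, ih, hassoc]

include hassoc in
lemma exists_idem_pow [Finite S] (x : S) : ∃ M : ℕ, m (pw m x M) (pw m x M) = pw m x M ∧
    m x (pw m x M) = m (pw m x M) x := by
  -- pigeonhole
  obtain ⟨a, b, hab, heq⟩ : ∃ a b : ℕ, a < b ∧ pw m x a = pw m x b := by
    obtain ⟨i, j, hne, hij⟩ := Finite.exists_ne_map_eq_of_infinite (pw m x)
    rcases lt_or_gt_of_ne hne with h | h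
    · exact ⟨i, j, h, hij⟩
    · exact ⟨j, i, h, hij.symm⟩
  set d := b - a with hd
  have hd1 : 1 ≤ d := by omega
  have shift : ∀ j, pw m x (a + j) = pw m x (a + j + d) := by
    intro j
    induction j with
    | zero =>
        have h0' : a + 0 + d = b := by omega
        rw [h0']
        exact heq
    | succ j ih =>
        rw [show a + (j + 1) + d = (a + j + d) + 1 by omega,
          show a + (j + 1) = (a + j) + 1 by omega]
        show m (pw m x (a + j)) x = m (pw m x (a + j + d)) x
        rw [ih]
  have iter : ∀ (t : ℕ) (j : ℕ), pw m x (a + j) = pw m x (a + j + t * d) := by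
    intro t
    induction t with
    | zero => simp
    | succ t ih =>
        intro j
        rw [ih j, show a + j + (t + 1) * d = (a + (j + t * d)) + d by ring,
          ← shift (j + t * d), show a + (j + t * d) = a + j + t * d by ring]
  -- choose M := (a+1)*d - 1
  have hge : a + 1 ≤ (a + 1) * d := Nat.le_mul_of_pos_right _ (by omega)
  set M := (a + 1) * d - 1 with hM
  have hM1 : M + 1 = (a + 1) * d := by omega
  have haM : a ≤ M := by omega
  have key : pw m x (M + M + 1) = pw m x M := by
    have : M + M + 1 = a + (M - a) + (a + 1) * d := by omega
    rw [this, ← iter (a + 1) (M - a), show a + (M - a) = M by omega]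
  refine ⟨M, ?_, ?_⟩
  · rw [← pw_add hassoc x M M, key]
  · have h1 : m x (pw m x M) = pw m x (0 + M + 1) := (pw_add hassoc x 0 M).symm
    have h2 : m (pw m x M) x = pw m x (M + 0 + 1) := (pw_add hassoc x M 0).symm
    rw [h1, h2, show 0 + M + 1 = M + 0 + 1 by omega]
end Pow


section Core

variable {S : Type*} [Finite S] [Nonempty S]

/-- The core structure theorem: for a finite bijective solution, the induced
multiplication is left simple and right cancellative. -/
theorem core (u uinv : S × S → S × S) (h₁ : ∀ p, uinv (u p) = p)
    (h₂ : ∀ p, u (uinv p) = p) (hPE : IsPE u) :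
    (∀ x w : S, ∃ p, mul u p w = x) ∧
    (∀ q q' w : S, mul u q w = mul u q' w → q = q') := by
  letI : Fintype S := Fintype.ofFinite S
  have hassoc := pe_assoc u hPE
  have hB := pe_B u hPE
  set t : S × S → S × S := dual uinv with ht
  set tinv : S × S → S × S := dualinv u with htinv
  have ht₁ : ∀ p, tinv (t p) = p := dual_inv₁ u uinv h₂
  have ht₂ : ∀ p, t (tinv p) = p := dual_inv₂ u uinv h₁
  have hPEt : IsPE t := dual_PE u uinv h₁ h₂ hPE
  have hassoct := pe_assoc t hPEt
  -- the two circle-link facts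
  have linkut : ∀ a w : S, mul t a w ∈ LC u w := by
    intro a w
    exact LC_circlink uinv hassoc h₁ h₂ a w
  have linktu : ∀ a w : S, mul u a w ∈ LC t w := by
    intro a w
    exact LC_circlink tinv hassoct ht₁ ht₂ a w
  have coincide : ∀ y : S, LC u y = LC t y := by
    intro y
    ext z
    rw [mem_LC, mem_LC]
    constructor
    · rintro ⟨p, rfl⟩; exact mem_LC.mp (linktu p y)
    · rintro ⟨p, rfl⟩; exact mem_LC.mp (linkut p y)
  -- an idempotent
  obtain ⟨y₀⟩ := ‹Nonempty S›
  obtain ⟨M, he, -⟩ := exists_idem_pow (m := mul u) hassoc y₀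
  set e : S := pw (mul u) y₀ M with hedef
  -- (E) relation
  have hE : ∀ x y : S, mul t (theta u x y) (mul u x y) = y := by
    intro x y
    show (uinv (mul u x y, theta u x y)).2 = y
    rw [show (mul u x y, theta u x y) = u (x, y) from rfl, h₁]
  -- the key claim
  have hclaim : ∀ x : S, LC u x = LC u e := by
    intro x
    by_contra hx
    obtain ⟨p₂, hp₂, hp₂e⟩ := LC_crosssurj (x := x) uinv hassoc h₁ h₂
      (LC_refl uinv hassoc h₁ h₂ e)
    set a₁ := theta u e e with ha₁def
    set a₂ := theta u p₂ e with ha₂def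
    have hBe : mul u a₁ a₁ = a₁ := by
      have := hB e e e
      rwa [he] at this
    have hBp : mul u a₂ a₁ = a₂ := by
      have := hB p₂ e e
      rwa [hp₂e, he, ← ha₁def, ← ha₂def] at this
    have hE1 : mul t a₁ e = e := by have := hE e e; rwa [he] at this
    have hE2 : mul t a₂ e = e := by have := hE p₂ e; rwa [hp₂e] at this
    have ha₁ : a₁ ∈ LC u a₁ := mem_LC.mpr ⟨a₁, hBe⟩
    have ha₂ : a₂ ∈ LC u a₁ := mem_LC.mpr ⟨a₂, hBp⟩
    rw [coincide] at ha₁ ha₂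
    have haa : a₁ = a₂ :=
      LC_cancel tinv hassoct ht₁ ht₂ ha₁ ha₂ (by rw [hE1, hE2])
    have hu1 : u (e, e) = (e, a₁) := by
      rw [show u (e, e) = (mul u e e, theta u e e) from rfl, he]
    have hu2 : u (p₂, e) = (e, a₁) := by
      rw [show u (p₂, e) = (mul u p₂ e, theta u p₂ e) from rfl, hp₂e, haa]
    have hep : (e, e) = ((p₂, e) : S × S) := by
      have := congrArg uinv (hu1.trans hu2.symm)
      rwa [h₁, h₁] at this
    have hep' : e = p₂ := congrArg Prod.fst hep
    rw [← hep'] at hp₂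
    exact hx (LC_stable uinv hassoc h₁ h₂ hp₂).symm
  constructor
  · intro x w
    have : x ∈ LC u w := by
      rw [hclaim w, ← hclaim x]
      exact LC_refl uinv hassoc h₁ h₂ x
    exact mem_LC.mp this
  · intro q q' w hqq
    have hq : q ∈ LC u e := by rw [← hclaim q]; exact LC_refl uinv hassoc h₁ h₂ q
    have hq' : q' ∈ LC u e := by rw [← hclaim q']; exact LC_refl uinv hassoc h₁ h₂ q'
    exact LC_cancel uinv hassoc h₁ h₂ hq hq' hqq

end Core


/-- for a finite bijective solution `(S,s)` to the Pentagon Equation,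
the map `t(x,y) = (x∘y, ψ_x(y))` built from `s⁻¹` is again a finite bijective
solution; in particular `(S,∘)` is a left group. -/
theorem statement8 {S : Type*} [Finite S] [Nonempty S] (s : S × S → S × S)
    (hPE : IsPE s) (hbij : Function.Bijective s)
    (sinv : S × S → S × S) (hinv₁ : ∀ p, sinv (s p) = p) (hinv₂ : ∀ p, s (sinv p) = p) :
    IsPE (fun p : S × S => (circ sinv p.1 p.2, psi sinv p.1 p.2)) ∧
    Function.Bijective (fun p : S × S => (circ sinv p.1 p.2, psi sinv p.1 p.2)) ∧
    ∃ (E : Type) (G : Type) (_ : Nonempty E) (_ : Group G) (f : S ≃ E × G),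
      ∀ x y : S, f (circ sinv x y) = ((f x).1, (f x).2 * (f y).2) := by
  have hPEt : IsPE (dual sinv) := dual_PE s sinv hinv₁ hinv₂ hPE
  have hbijt : Function.Bijective (dual sinv) := dual_bij s sinv hinv₁ hinv₂
  refine ⟨hPEt, hbijt, ?_⟩
  -- apply the core theorem to the dual solution
  set t : S × S → S × S := dual sinv with htdef
  set tinv : S × S → S × S := dualinv s with htinvdef
  have ht₁ : ∀ p, tinv (t p) = p := dual_inv₁ s sinv hinv₂
  have ht₂ : ∀ p, t (tinv p) = p := dual_inv₂ s sinv hinv₁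
  obtain ⟨ls, rc⟩ := core t tinv ht₁ ht₂ hPEt
  have ha := pe_assoc t hPEt
  -- notation: c = the circle operation
  set c : S → S → S := mul t with hcdef
  have hcirc : ∀ x y : S, circ sinv x y = c x y := fun _ _ => rfl
  -- every idempotent is a right identity
  have rightId : ∀ z w : S, c w w = w → c z w = z := by
    intro z w hw
    refine rc (c z w) z w ?_
    rw [ha, hw]
  -- every element has an idempotent left stabilizer
  have idemStab : ∀ x : S, ∃ eps : S, c eps eps = eps ∧ c eps x = x := by
    intro x
    obtain ⟨M, hidem, hcomm⟩ := exists_idem_pow (m := c) ha x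
    refine ⟨pw c x M, hidem, ?_⟩
    rw [← hcomm]
    exact rightId x _ hidem
  obtain ⟨y₀⟩ := ‹Nonempty S›
  obtain ⟨u₀, hu₀, -⟩ := idemStab y₀
  classical
  set E := {e : S // c e e = e} with hE
  set G := {g : S // c u₀ g = g} with hG
  letI : Mul G := ⟨fun a b => ⟨c a.1 b.1, by rw [← ha, a.2]⟩⟩
  letI : One G := ⟨⟨u₀, hu₀⟩⟩
  letI : Inv G := ⟨fun g => ⟨c u₀ (Classical.choose (ls u₀ g.1)), by rw [← ha, hu₀]⟩⟩
  have hmulval : ∀ a b : G, (a * b).1 = c a.1 b.1 := fun _ _ => rfl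
  letI grp : Group G := by
    refine Group.ofLeftAxioms ?_ ?_ ?_
    · intro a b d
      apply Subtype.ext
      rw [hmulval, hmulval, hmulval, hmulval, ha]
    · intro a
      apply Subtype.ext
      rw [hmulval]
      exact a.2
    · intro a
      apply Subtype.ext
      rw [hmulval]
      show c (c u₀ (Classical.choose (ls u₀ a.1))) a.1 = u₀
      rw [ha, Classical.choose_spec (ls u₀ a.1), hu₀]
  -- the bijection
  set eps : S → S := fun x => Classical.choose (idemStab x) with hepsdef
  have heps : ∀ x : S, c (eps x) (eps x) = eps x ∧ c (eps x) x = x :=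
    fun x => Classical.choose_spec (idemStab x)
  set F : S → E × G :=
    fun x => (⟨eps x, (heps x).1⟩, ⟨c u₀ x, by rw [← ha, hu₀]⟩) with hFdef
  have hFinj : Function.Injective F := by
    intro x y hxy
    have h1 : eps x = eps y := congrArg (fun r : E × G => r.1.1) hxy
    have h2 : c u₀ x = c u₀ y := congrArg (fun r : E × G => r.2.1) hxy
    have hx : x = c (eps x) (c u₀ x) := by
      rw [← ha, rightId (eps x) u₀ hu₀, (heps x).2]
    have hy : y = c (eps y) (c u₀ y) := by
      rw [← ha, rightId (eps y) u₀ hu₀, (heps y).2]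
    rw [hx, hy, h1, h2]
  have hFsurj : Function.Surjective F := by
    rintro ⟨⟨e, he⟩, ⟨g, hg⟩⟩
    refine ⟨c e g, ?_⟩
    have hstab : c e (c e g) = c e g := by rw [← ha, he]
    have hepseq : eps (c e g) = e :=
      rc (eps (c e g)) e (c e g) (by rw [(heps (c e g)).2, hstab])
    have hh2 : c (c u₀ e) (c u₀ e) = c u₀ e := by
      rw [ha u₀ e (c u₀ e), ← ha e u₀ e, rightId e u₀ hu₀, he]
    have hh : c u₀ (c u₀ e) = c u₀ e := by rw [← ha, hu₀]
    have hu₀e : u₀ = c u₀ e := rc u₀ (c u₀ e) (c u₀ e) (by rw [hh, hh2])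
    have hgcomp : c u₀ (c e g) = g := by
      rw [← ha, ← hu₀e, hg]
    apply Prod.ext
    · exact Subtype.ext hepseq
    · exact Subtype.ext hgcomp
  -- the two components of F, abstractly
  have hF1 : ∀ x y : S, (F (c x y)).1 = (F x).1 := by
    intro x y
    apply Subtype.ext
    show eps (c x y) = eps x
    refine rc (eps (c x y)) (eps x) (c x y) ?_
    rw [(heps (c x y)).2, ← ha, (heps x).2]
  have hF2 : ∀ x y : S, (F (c x y)).2 = (F x).2 * (F y).2 := by
    intro x y
    apply Subtype.ext
    rw [hmulval]
    show c u₀ (c x y) = c (c u₀ x) (c u₀ y)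
    rw [← ha (c u₀ x) u₀ y, rightId (c u₀ x) u₀ hu₀, ha]
  -- transport to Type 0 (using an instance-clean carrier)
  letI : Fintype E := Fintype.ofFinite E
  letI : Fintype G := Fintype.ofFinite G
  set E₀ : Type := {x : Fin (Fintype.card E) // True} with hE₀
  set G₀ : Type := {x : Fin (Fintype.card G) // True} with hG₀
  set qE : E ≃ E₀ :=
    (Fintype.equivFin E).trans (Equiv.subtypeUnivEquiv (fun _ => trivial)).symm with hqE
  set qG : G ≃ G₀ :=
    (Fintype.equivFin G).trans (Equiv.subtypeUnivEquiv (fun _ => trivial)).symm with hqG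
  letI : Mul G₀ := ⟨fun a b => qG (qG.symm a * qG.symm b)⟩
  letI : One G₀ := ⟨qG 1⟩
  letI : Inv G₀ := ⟨fun a => qG (qG.symm a)⁻¹⟩
  have hm0 : ∀ a b : G₀, a * b = qG (qG.symm a * qG.symm b) := fun _ _ => rfl
  letI grp0 : Group G₀ := by
    refine Group.ofLeftAxioms ?_ ?_ ?_
    · intro a b d
      rw [hm0, hm0, hm0, hm0, Equiv.symm_apply_apply, Equiv.symm_apply_apply, mul_assoc]
    · intro a
      rw [show (1 : G₀) = qG 1 from rfl, hm0, Equiv.symm_apply_apply,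
        one_mul, Equiv.apply_symm_apply]
    · intro a
      rw [show a⁻¹ = qG (qG.symm a)⁻¹ from rfl, hm0, Equiv.symm_apply_apply,
        inv_mul_cancel]
      rfl
  have hmul0 : ∀ a b : G, qG (a * b) = qG a * qG b := by
    intro a b
    rw [hm0, Equiv.symm_apply_apply, Equiv.symm_apply_apply]
  set f : S ≃ E × G := Equiv.ofBijective F ⟨hFinj, hFsurj⟩ with hfdef
  set f₀ : S ≃ E₀ × G₀ := f.trans (qE.prodCongr qG) with hf₀
  refine ⟨E₀, G₀, ⟨qE ⟨u₀, hu₀⟩⟩, grp0, f₀, ?_⟩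
  intro x y
  have hfap : ∀ z, f₀ z = (qE (F z).1, qG (F z).2) := fun _ => rfl
  rw [hcirc, hfap, hfap, hfap]
  apply Prod.ext
  · show qE (F (c x y)).1 = qE (F x).1
    rw [hF1]
  · show qG (F (c x y)).2 = qG (F x).2 * qG (F y).2
    rw [hF2, hmul0]


end PE
end

section
/- Let (S,s) be a finite bijective set-theoretic solution to the Pentagon Equation, with s(x,y) = (x·y, θ_x(y)). Fix a ·-idempotent e₀ and set 1 := θ_{e₀}(e₀) and G₁ := {1·x : x ∈ S}. Define a relation ≈ on S by: u ≈ v if and only if there exist ·-idempotents e,f and g ∈ G₁ with θ_e = θ_f, u = e·g and v = f·g. Then ≈ is an equivalence relation on S which is a congruence of the semigroup (S,·) (u ≈ v implies q·u ≈ q·v and u·q ≈ v·q for all q ∈ S); moreover u ≈ v implies θ_u = θ_v, and u ≈ v implies θ_q(u) ≈ θ_q(v) for every q ∈ S. Consequently s induces a bijective set-theoretic solution to the Pentagon Equation on the quotient set S/≈ (the retract of (S,s)). -/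
/-!
The pentagon identities at `(e₀, e₀, e₀)` show that `1 := θ_{e₀}(e₀)` satisfies `1·1 = 1` and
`θ_1(1) = 1`. Counting with the bijection `s` shows that `θ_x(y) = y` forces `θ_{xy} = id`, so
`θ_1 = id`; two further counts make every `θ_x` bijective and every idempotent a right identity of
`(S,·)`. Hence `G₁ = 1·S` is a finite group, and `f·g = e·g` with `g ∈ G₁` can be cancelled, which
gives transitivity. Every `w` equals `E·w` for an idempotent `E` commuting with `w`, so
`p·w = (p·E)·(1·w)` for every idempotent `p`; together with `θ_q(r·g) = θ_q(r)·θ_q(g)` for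
idempotent `r` (as `q·r = q`) this carries `≈` through `θ_q`.
-/

namespace PE

/-- The retract relation `≈` on `S` (relative to the element `one = θ_{e₀}(e₀)`):
`u ≈ v` iff `u = e·g`, `v = f·g` for `·`-idempotents `e, f` with `θ_e = θ_f`
and `g ∈ G₁ = one·S`. -/
def retRel {S : Type*} (s : S × S → S × S) (one : S) (u v : S) : Prop :=
  ∃ e f g : S, mul s e e = e ∧ mul s f f = f ∧ theta s e = theta s f ∧
    (∃ x : S, g = mul s one x) ∧ u = mul s e g ∧ v = mul s f g

open Function Set

section PentagonSolution

variable {S : Type*} {s : S × S → S × S}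

theorem IsPE.components (hPE : IsPE s) (x y z : S) :
    mul s (mul s x y) z = mul s x (mul s y z) ∧
      mul s (theta s x y) (theta s (mul s x y) z) = theta s x (mul s y z) ∧
      theta s (theta s x y) (theta s (mul s x y) z) = theta s y z := by
  simpa [s12, s13, s23, mul, theta, Prod.ext_iff] using congrFun hPE (x, y, z)

theorem IsPE.mul_assoc (hPE : IsPE s) (x y z : S) :
    mul s (mul s x y) z = mul s x (mul s y z) :=
  (hPE.components x y z).1

theorem IsPE.mul_theta_theta (hPE : IsPE s) (x y z : S) :
    mul s (theta s x y) (theta s (mul s x y) z) = theta s x (mul s y z) :=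
  (hPE.components x y z).2.1

theorem IsPE.theta_theta_theta (hPE : IsPE s) (x y z : S) :
    theta s (theta s x y) (theta s (mul s x y) z) = theta s y z :=
  (hPE.components x y z).2.2

theorem IsPE.theta_theta_comp (hPE : IsPE s) (x y : S) :
    theta s (theta s x y) ∘ theta s (mul s x y) = theta s y :=
  funext (hPE.theta_theta_theta x y)

abbrev IsPE.semigroup (hPE : IsPE s) : Semigroup S where
  mul := mul s
  mul_assoc := hPE.mul_assoc

theorem exists_isIdempotentElem_commute {M : Type*} [Semigroup M] [Finite M] (u : M) :
    ∃ e : M, IsIdempotentElem e ∧ Commute e u := by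
  let : TopologicalSpace M := ⊥
  have : DiscreteTopology M := ⟨rfl⟩
  obtain ⟨e, he, hidem⟩ := exists_idempotent_in_compact_subsemigroup
    (fun _ => continuous_of_discreteTopology) (Subsemigroup.centralizer {u})
    ⟨u, Subsemigroup.mem_centralizer_iff.mpr fun g hg => by rw [mem_singleton_iff.mp hg]⟩
    (toFinite _).isCompact (fun _ hx _ hy => mul_mem hx hy)
  exact ⟨e, hidem, (Subsemigroup.mem_centralizer_iff.mp he u rfl).symm⟩

/-- For `T = {(a, b) | θ_x(a) = a}`, the pentagon identities give
`s(θ_x(a), θ_{xa}(b)) = (θ_x(ab), θ_a(b))`, so by injectivity `s p ∈ T` forces `p ∈ T` and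
`θ_{x p.1}(p.2) = p.2`. Thus `s⁻¹(T) ⊆ T`, an equality by counting. -/
theorem IsPE.theta_mul_eq_self_of_theta_eq_self [Finite S] (hPE : IsPE s) (hbij : Bijective s)
    {x y : S} (hy : theta s x y = y) (z : S) : theta s (mul s x y) z = z := by
  let T : Set (S × S) := {p | theta s x p.1 = p.1}
  have hfix : ∀ p, s p ∈ T → theta s x p.1 = p.1 ∧ theta s (mul s x p.1) p.2 = p.2 := by
    intro p hp
    have hsp : s (theta s x p.1, theta s (mul s x p.1) p.2) = s p := by
      refine Prod.ext ?_ ?_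
      · exact (hPE.mul_theta_theta x p.1 p.2).trans hp
      · exact hPE.theta_theta_theta x p.1 p.2
    exact Prod.ext_iff.mp (hbij.1 hsp)
  let σ := Equiv.ofBijective s hbij
  have hmaps : MapsTo σ.symm T T := fun q hq =>
    (hfix _ (by rwa [show s (σ.symm q) = q from σ.apply_symm_apply q])).1
  obtain ⟨q, hq, hqyz⟩ := (((toFinite T).injOn_iff_bijOn_of_mapsTo hmaps).mp
    σ.symm.injective.injOn).surjOn (show (y, z) ∈ T from hy)
  have hs : s (y, z) = q := by rw [← hqyz]; exact σ.apply_symm_apply q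
  exact (hfix (y, z) (hs ▸ hq)).2

theorem IsPE.mul_theta_self_self (hPE : IsPE s) {e : S} (he : mul s e e = e) :
    mul s (theta s e e) (theta s e e) = theta s e e := by
  simpa [he] using hPE.mul_theta_theta e e e

theorem IsPE.theta_theta_self_self (hPE : IsPE s) {e : S} (he : mul s e e = e) :
    theta s (theta s e e) (theta s e e) = theta s e e := by
  simpa [he] using hPE.theta_theta_theta e e e

theorem IsPE.theta_theta_self_eq_id [Finite S] (hPE : IsPE s) (hbij : Bijective s) {e : S}
    (he : mul s e e = e) : theta s (theta s e e) = id := by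
  funext z
  simpa [hPE.mul_theta_self_self he] using
    hPE.theta_mul_eq_self_of_theta_eq_self hbij (hPE.theta_theta_self_self he) z

/-- The set `B` of `y` with `θ_y` bijective satisfies `s(S × B) ⊆ B × B`; injectivity of `s` on
the finite set `S × B` forces `S × B ⊆ B × B`. -/
theorem IsPE.bijective_theta_of_bijective [Finite S] (hPE : IsPE s) (hbij : Bijective s) {y : S}
    (hy : Bijective (theta s y)) (x : S) : Bijective (theta s x) := by
  let B : Set S := {y | Bijective (theta s y)}
  have hmul : ∀ q, ∀ y ∈ B, mul s q y ∈ B := fun q y hy =>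
    Finite.injective_iff_bijective.mp
      (Injective.of_comp (f := theta s (theta s q y)) (hPE.theta_theta_comp q y ▸ hy.1))
  have htheta : ∀ q, ∀ y ∈ B, theta s q y ∈ B := fun q y hy =>
    Finite.surjective_iff_bijective.mp
      (Surjective.of_comp (g := theta s (mul s q y)) (hPE.theta_theta_comp q y ▸ hy.2))
  have hmaps : MapsTo s (univ ×ˢ B) (B ×ˢ B) := fun p hp =>
    ⟨hmul p.1 p.2 hp.2, htheta p.1 p.2 hp.2⟩
  obtain ⟨p, hp, hpx⟩ := (((toFinite (univ ×ˢ B)).injOn_iff_bijOn_of_mapsTo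
    (hmaps.mono_right (prod_mono (subset_univ B) subset_rfl))).mp hbij.1.injOn).surjOn
    (show (x, y) ∈ univ ×ˢ B from ⟨mem_univ x, hy⟩)
  simpa [hpx, B] using (hmaps hp).1

theorem IsPE.bijective_theta [Finite S] (hPE : IsPE s) (hbij : Bijective s) (x : S) :
    Bijective (theta s x) := by
  let := hPE.semigroup
  obtain ⟨e, he, -⟩ := exists_isIdempotentElem_commute x
  refine hPE.bijective_theta_of_bijective hbij (y := theta s e e) ?_ x
  rw [hPE.theta_theta_self_eq_id hbij he]
  exact bijective_id

def rightStab (s : S × S → S × S) (v : S) : Set S := {t | mul s v t = v}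

/-- Writing `(u, b) = s(a, c)`, the pentagon identities give `b·θ_u(z) = θ_a(c·z)` and
`b = θ_a(c)`, so `θ_u(z) ∈ rightStab b` forces `c·z = c`. -/
theorem IsPE.theta_preimage_rightStab_subset [Finite S] (hPE : IsPE s) (hbij : Bijective s)
    (u b : S) : theta s u ⁻¹' rightStab s b ⊆ rightStab s u := by
  intro z hz
  obtain ⟨p, hp⟩ := hbij.2 (u, b)
  have hp1 : mul s p.1 p.2 = u := congrArg Prod.fst hp
  have hp2 : theta s p.1 p.2 = b := congrArg Prod.snd hp
  have hcancel : mul s p.2 z = p.2 := by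
    apply (hPE.bijective_theta hbij p.1).1
    have := hPE.mul_theta_theta p.1 p.2 z
    rw [hp1, hp2, hz] at this
    rw [← this, hp2]
  change mul s u z = u
  rw [← hp1, hPE.mul_assoc, hcancel]

/-- As `θ_u` is bijective, `theta_preimage_rightStab_subset` makes all right stabilisers equally
large, hence `θ_u⁻¹(rightStab b) = rightStab u` for every `b`. -/
theorem IsPE.rightStab_eq [Finite S] (hPE : IsPE s) (hbij : Bijective s) (u v : S) :
    rightStab s u = rightStab s v := by
  have hncard : ∀ u b, (theta s u ⁻¹' rightStab s b).ncard = (rightStab s b).ncard := fun u _ =>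
    ncard_preimage_of_injective_subset_range (hPE.bijective_theta hbij u).1
      (by rw [(hPE.bijective_theta hbij u).2.range_eq]; exact subset_univ _)
  have hle : ∀ u b, (rightStab s b).ncard ≤ (rightStab s u).ncard := fun u b =>
    hncard u b ▸ ncard_le_ncard (hPE.theta_preimage_rightStab_subset hbij u b)
  have hpre : ∀ b, theta s u ⁻¹' rightStab s b = rightStab s u := fun b =>
    eq_of_subset_of_ncard_le (hPE.theta_preimage_rightStab_subset hbij u b)
      (hncard u b ▸ hle b u)
  exact preimage_injective.mpr (hPE.bijective_theta hbij u).2 ((hpre u).trans (hpre v).symm)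

theorem IsPE.mul_eq_left_of_idem [Finite S] (hPE : IsPE s) (hbij : Bijective s) {e : S}
    (he : mul s e e = e) (u : S) : mul s u e = u := by
  have : e ∈ rightStab s e := he
  rwa [hPE.rightStab_eq hbij e u] at this

theorem IsPE.exists_idem_mul_eq [Finite S] (hPE : IsPE s) (hbij : Bijective s) (u : S) :
    ∃ e, mul s e e = e ∧ mul s e u = u := by
  let := hPE.semigroup
  obtain ⟨e, he, hcomm⟩ := exists_isIdempotentElem_commute u
  exact ⟨e, he, hcomm.eq.trans (hPE.mul_eq_left_of_idem hbij he u)⟩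

theorem IsPE.idem_mul_of_idem [Finite S] (hPE : IsPE s) (hbij : Bijective s) {e f : S}
    (he : mul s e e = e) (hf : mul s f f = f) : mul s (mul s e f) (mul s e f) = mul s e f := by
  rw [hPE.mul_assoc, ← hPE.mul_assoc f, hPE.mul_eq_left_of_idem hbij he, hf]

theorem IsPE.theta_mul_congr [Finite S] (hPE : IsPE s) (hbij : Bijective s) {a b : S}
    (hab : theta s a = theta s b) (c : S) : theta s (mul s a c) = theta s (mul s b c) := by
  funext z
  apply (hPE.bijective_theta hbij (theta s a c)).1
  rw [hPE.theta_theta_theta, hab, hPE.theta_theta_theta]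

theorem IsPE.theta_mul_eq_id [Finite S] (hPE : IsPE s) (hbij : Bijective s) {a : S}
    (ha : theta s a = id) (x : S) : theta s (mul s a x) = id := by
  funext z
  apply (hPE.bijective_theta hbij x).1
  simpa [ha] using hPE.theta_theta_theta a x z

section Retract

variable {one : S}

/-- Right multiplication by `g ∈ 1·S` is injective on `1·S`, since `θ_c = id` there turns
`s(c, g) = (c·g, g)` into an injective function of `c`. -/
theorem IsPE.exists_mul_eq_one [Finite S] (hPE : IsPE s) (hbij : Bijective s)
    (h1 : mul s one one = one) (hθ : theta s one = id) (x : S) :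
    ∃ k, mul s (mul s one x) k = one := by
  let G := range (mul s one)
  have hmaps : ∀ g ∈ G, MapsTo (mul s · g) G G := by
    rintro g - _ ⟨t, rfl⟩
    exact ⟨mul s t g, (hPE.mul_assoc one t g).symm⟩
  have hinj : ∀ g, InjOn (mul s · g) G := by
    rintro g _ ⟨c, rfl⟩ _ ⟨d, rfl⟩ hcd
    have hθcd : theta s (mul s one c) g = theta s (mul s one d) g := by
      rw [hPE.theta_mul_eq_id hbij hθ, hPE.theta_mul_eq_id hbij hθ]
    have hs : s (mul s one c, g) = s (mul s one d, g) := Prod.ext hcd hθcd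
    exact (Prod.ext_iff.mp (hbij.1 hs)).1
  have hg : mul s one x ∈ G := ⟨x, rfl⟩
  obtain ⟨k, -, hkg⟩ := (((toFinite G).injOn_iff_bijOn_of_mapsTo (hmaps _ hg)).mp
    (hinj _)).surjOn (⟨one, h1⟩ : one ∈ G)
  refine ⟨k, hinj (mul s one x) ⟨mul s x k, (hPE.mul_assoc one x k).symm⟩ ⟨one, h1⟩ ?_⟩
  calc mul s (mul s (mul s one x) k) (mul s one x)
      = mul s (mul s one x) one := by rw [hPE.mul_assoc]; exact congrArg _ hkg
    _ = mul s one (mul s one x) := by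
      rw [hPE.mul_eq_left_of_idem hbij h1, ← hPE.mul_assoc, h1]

theorem IsPE.mul_right_cancel [Finite S] (hPE : IsPE s) (hbij : Bijective s)
    (h1 : mul s one one = one) (hθ : theta s one = id) {a b x : S}
    (h : mul s a (mul s one x) = mul s b (mul s one x)) : a = b := by
  obtain ⟨k, hk⟩ := hPE.exists_mul_eq_one hbij h1 hθ x
  calc a = mul s (mul s a (mul s one x)) k := by
        rw [hPE.mul_assoc, hk, hPE.mul_eq_left_of_idem hbij h1]
    _ = mul s (mul s b (mul s one x)) k := by rw [h]
    _ = b := by rw [hPE.mul_assoc, hk, hPE.mul_eq_left_of_idem hbij h1]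

theorem IsPE.one_mul_idem_mul [Finite S] (hPE : IsPE s) (hbij : Bijective s)
    (h1 : mul s one one = one) {f : S} (hf : mul s f f = f) (x : S) :
    mul s one (mul s f (mul s one x)) = mul s one x := by
  rw [← hPE.mul_assoc, hPE.mul_eq_left_of_idem hbij hf, ← hPE.mul_assoc, h1]

theorem retRel.symm {u v : S} (h : retRel s one u v) : retRel s one v u :=
  let ⟨e, f, g, he, hf, hef, hg, hu, hv⟩ := h
  ⟨f, e, g, hf, he, hef.symm, hg, hv, hu⟩

/-- Writing `w = E·w` with `E` idempotent, `p·w = (p·E)·(1·w)`. -/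
theorem IsPE.retRel_mul_mul [Finite S] (hPE : IsPE s) (hbij : Bijective s)
    (h1 : mul s one one = one) {p p' : S} (hp : mul s p p = p) (hp' : mul s p' p' = p')
    (hpp' : theta s p = theta s p') (w : S) : retRel s one (mul s p w) (mul s p' w) := by
  obtain ⟨E, hE, hEw⟩ := hPE.exists_idem_mul_eq hbij w
  have hrepr : ∀ r, mul s r w = mul s (mul s r E) (mul s one w) := fun r => by
    rw [hPE.mul_assoc, ← hPE.mul_assoc E, hPE.mul_eq_left_of_idem hbij h1, hEw]
  exact ⟨mul s p E, mul s p' E, mul s one w, hPE.idem_mul_of_idem hbij hp hE,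
    hPE.idem_mul_of_idem hbij hp' hE, hPE.theta_mul_congr hbij hpp' E, ⟨w, rfl⟩,
    hrepr p, hrepr p'⟩

theorem IsPE.retRel_refl [Finite S] (hPE : IsPE s) (hbij : Bijective s)
    (h1 : mul s one one = one) (u : S) : retRel s one u u := by
  obtain ⟨E, hE, hEu⟩ := hPE.exists_idem_mul_eq hbij u
  simpa [hEu] using hPE.retRel_mul_mul hbij h1 hE hE rfl u

theorem IsPE.retRel_trans [Finite S] (hPE : IsPE s) (hbij : Bijective s)
    (h1 : mul s one one = one) (hθ : theta s one = id) {u v w : S}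
    (huv : retRel s one u v) (hvw : retRel s one v w) : retRel s one u w := by
  obtain ⟨e₁, f₁, g₁, he₁, hf₁, hθ₁, ⟨x₁, rfl⟩, rfl, rfl⟩ := huv
  obtain ⟨e₂, f₂, g₂, he₂, hf₂, hθ₂, ⟨x₂, rfl⟩, hv, rfl⟩ := hvw
  have hg : mul s one x₁ = mul s one x₂ := by
    rw [← hPE.one_mul_idem_mul hbij h1 hf₁, hv, hPE.one_mul_idem_mul hbij h1 he₂]
  rw [hg] at hv ⊢
  have hfe : f₁ = e₂ := hPE.mul_right_cancel hbij h1 hθ hv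
  exact ⟨e₁, f₂, _, he₁, hf₂, hθ₁.trans (hfe ▸ hθ₂), ⟨x₂, rfl⟩, rfl, rfl⟩

theorem IsPE.retRel_equivalence [Finite S] (hPE : IsPE s) (hbij : Bijective s)
    (h1 : mul s one one = one) (hθ : theta s one = id) : Equivalence (retRel s one) :=
  ⟨hPE.retRel_refl hbij h1, retRel.symm, hPE.retRel_trans hbij h1 hθ⟩

theorem IsPE.theta_eq_of_retRel [Finite S] (hPE : IsPE s) (hbij : Bijective s) {u v : S}
    (h : retRel s one u v) : theta s u = theta s v := by
  obtain ⟨e, f, g, -, -, hef, -, rfl, rfl⟩ := h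
  exact hPE.theta_mul_congr hbij hef g

theorem IsPE.retRel_mul_left [Finite S] (hPE : IsPE s) (hbij : Bijective s)
    (h1 : mul s one one = one) {u v : S} (h : retRel s one u v) (q : S) :
    retRel s one (mul s q u) (mul s q v) := by
  obtain ⟨e, f, g, he, hf, -, -, rfl, rfl⟩ := h
  rw [← hPE.mul_assoc, ← hPE.mul_assoc, hPE.mul_eq_left_of_idem hbij he,
    hPE.mul_eq_left_of_idem hbij hf]
  exact hPE.retRel_refl hbij h1 _

theorem IsPE.retRel_mul_right (hPE : IsPE s) {u v : S} (h : retRel s one u v) (q : S) :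
    retRel s one (mul s u q) (mul s v q) := by
  obtain ⟨e, f, g, he, hf, hef, ⟨x, rfl⟩, rfl, rfl⟩ := h
  exact ⟨e, f, _, he, hf, hef, ⟨mul s x q, hPE.mul_assoc one x q⟩,
    hPE.mul_assoc _ _ _, hPE.mul_assoc _ _ _⟩

/-- Since `q·r = q` for an idempotent `r`, `θ_q(r·g) = θ_q(r)·θ_q(g)`, `θ_q(r)` is again
idempotent, and `θ_{θ_q(r)} ∘ θ_q = θ_r`. -/
theorem IsPE.retRel_theta [Finite S] (hPE : IsPE s) (hbij : Bijective s)
    (h1 : mul s one one = one) {u v : S} (h : retRel s one u v) (q : S) :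
    retRel s one (theta s q u) (theta s q v) := by
  obtain ⟨e, f, g, he, hf, hef, -, rfl, rfl⟩ := h
  have hdistrib : ∀ {r}, mul s r r = r →
      theta s q (mul s r g) = mul s (theta s q r) (theta s q g) := fun {r} hr => by
    rw [← hPE.mul_theta_theta, hPE.mul_eq_left_of_idem hbij hr]
  have hidem : ∀ {r}, mul s r r = r →
      mul s (theta s q r) (theta s q r) = theta s q r := fun {r} hr => by
    simpa [hPE.mul_eq_left_of_idem hbij hr, hr] using hPE.mul_theta_theta q r r
  have hcomp : ∀ {r}, mul s r r = r → theta s (theta s q r) ∘ theta s q = theta s r :=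
    fun {r} hr => by simpa [hPE.mul_eq_left_of_idem hbij hr] using hPE.theta_theta_comp q r
  have hθ : theta s (theta s q e) = theta s (theta s q f) :=
    (hPE.bijective_theta hbij q).2.injective_comp_right <| by
      dsimp only
      rw [hcomp he, hcomp hf, hef]
  rw [hdistrib he, hdistrib hf]
  exact hPE.retRel_mul_mul hbij h1 (hidem he) (hidem hf) hθ _

end Retract

theorem IsPE.of_semiconj {T : Type*} {sbar : T × T → T × T} (hPE : IsPE s) {π : S → T}
    (hπ : Surjective π) (h : ∀ a b, sbar (π a, π b) = (π (s (a, b)).1, π (s (a, b)).2)) :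
    IsPE sbar := by
  let π₃ : S × S × S → T × T × T := Prod.map π (Prod.map π π)
  have h12 : ∀ t, s12 sbar (π₃ t) = π₃ (s12 s t) := fun t => by simp [π₃, s12, h]
  have h13 : ∀ t, s13 sbar (π₃ t) = π₃ (s13 s t) := fun t => by simp [π₃, s13, h]
  have h23 : ∀ t, s23 sbar (π₃ t) = π₃ (s23 s t) := fun t => by simp [π₃, s23, h, Prod.map]
  funext t'
  obtain ⟨t, rfl⟩ := hπ.prodMap (hπ.prodMap hπ) t'
  simp only [comp_apply]
  rw [h12, h13, h23, h23, h12]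
  exact congrArg π₃ (congrFun hPE t)

/-- The quotient is realised on a `Fin n`, so that it lives in `Type`. -/
theorem IsPE.exists_quotient [Finite S] (hPE : IsPE s) (hbij : Bijective s) {r : S → S → Prop}
    (hr : Equivalence r) (hmul : ∀ a b c d, r a b → r c d → r (mul s a c) (mul s b d))
    (htheta : ∀ a b c d, r a b → r c d → r (theta s a c) (theta s b d)) :
    ∃ (T : Type) (π : S → T) (sbar : T × T → T × T),
      Surjective π ∧ (∀ u v : S, π u = π v ↔ r u v) ∧ IsPE sbar ∧ Bijective sbar ∧
      (∀ p : S × S, sbar (π p.1, π p.2) = (π (s p).1, π (s p).2)) := by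
  let Q := Quotient ⟨r, hr⟩
  let π : S → Fin (Nat.card Q) := fun u => Finite.equivFin Q (Quotient.mk _ u)
  have hπ : Surjective π := (Finite.equivFin Q).surjective.comp Quotient.mk_surjective
  have hker : ∀ u v, π u = π v ↔ r u v := fun u v =>
    (Finite.equivFin Q).injective.eq_iff.trans Quotient.eq
  have hrep : ∀ u, r (surjInv hπ (π u)) u := fun u => (hker _ _).mp (surjInv_eq hπ _)
  let sbar : Fin (Nat.card Q) × Fin (Nat.card Q) → Fin (Nat.card Q) × Fin (Nat.card Q) :=
    fun t => (π (mul s (surjInv hπ t.1) (surjInv hπ t.2)),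
      π (theta s (surjInv hπ t.1) (surjInv hπ t.2)))
  have hsbar : ∀ a b, sbar (π a, π b) = (π (s (a, b)).1, π (s (a, b)).2) := fun a b =>
    Prod.ext ((hker _ _).mpr (hmul _ _ _ _ (hrep a) (hrep b)))
      ((hker _ _).mpr (htheta _ _ _ _ (hrep a) (hrep b)))
  have hsurj : Surjective sbar := by
    rintro ⟨t₁, t₂⟩
    obtain ⟨a, rfl⟩ := hπ t₁
    obtain ⟨b, rfl⟩ := hπ t₂
    obtain ⟨p, hp⟩ := hbij.2 (a, b)
    exact ⟨(π p.1, π p.2), by rw [hsbar, hp]⟩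
  exact ⟨_, π, sbar, hπ, hker, hPE.of_semiconj hπ hsbar,
    ⟨Finite.injective_iff_surjective.mpr hsurj, hsurj⟩, fun p => hsbar p.1 p.2⟩

end PentagonSolution

theorem statement11_general {S : Type*} [Finite S] (s : S × S → S × S)
    (hPE : IsPE s) (hbij : Function.Bijective s)
    (e₀ : S) (he₀ : mul s e₀ e₀ = e₀) :
    Equivalence (retRel s (theta s e₀ e₀)) ∧
    (∀ u v q : S, retRel s (theta s e₀ e₀) u v →
      retRel s (theta s e₀ e₀) (mul s q u) (mul s q v) ∧
      retRel s (theta s e₀ e₀) (mul s u q) (mul s v q)) ∧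
    (∀ u v : S, retRel s (theta s e₀ e₀) u v → theta s u = theta s v) ∧
    (∀ u v q : S, retRel s (theta s e₀ e₀) u v →
      retRel s (theta s e₀ e₀) (theta s q u) (theta s q v)) ∧
    (∃ (T : Type) (π : S → T) (sbar : T × T → T × T),
      Function.Surjective π ∧
      (∀ u v : S, π u = π v ↔ retRel s (theta s e₀ e₀) u v) ∧
      IsPE sbar ∧ Function.Bijective sbar ∧
      (∀ p : S × S, sbar (π p.1, π p.2) = (π (s p).1, π (s p).2))) := by
  have h1 := hPE.mul_theta_self_self he₀
  have hθ := hPE.theta_theta_self_eq_id hbij he₀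
  have hequiv := hPE.retRel_equivalence hbij h1 hθ
  refine ⟨hequiv,
    fun u v q h => ⟨hPE.retRel_mul_left hbij h1 h q, hPE.retRel_mul_right h q⟩,
    fun u v h => hPE.theta_eq_of_retRel hbij h,
    fun u v q h => hPE.retRel_theta hbij h1 h q,
    hPE.exists_quotient hbij hequiv ?_ ?_⟩
  · exact fun a b c d hab hcd =>
      hequiv.trans (hPE.retRel_mul_right hab c) (hPE.retRel_mul_left hbij h1 hcd b)
  · intro a b c d hab hcd
    rw [hPE.theta_eq_of_retRel hbij hab]
    exact hPE.retRel_theta hbij h1 hcd b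

/-- the relation `≈` is an equivalence relation which is a congruence of
`(S,·)`, `u ≈ v` implies `θ_u = θ_v` and `θ_q(u) ≈ θ_q(v)`; consequently `s` induces a
bijective set-theoretic solution to the Pentagon Equation on the quotient `S/≈`
(the retract of `(S,s)`). -/
theorem statement11 {S : Type*} [Finite S] [Nonempty S] (s : S × S → S × S)
    (hPE : IsPE s) (hbij : Function.Bijective s)
    (e₀ : S) (he₀ : mul s e₀ e₀ = e₀) :
    Equivalence (retRel s (theta s e₀ e₀)) ∧
    (∀ u v q : S, retRel s (theta s e₀ e₀) u v →
      retRel s (theta s e₀ e₀) (mul s q u) (mul s q v) ∧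
      retRel s (theta s e₀ e₀) (mul s u q) (mul s v q)) ∧
    (∀ u v : S, retRel s (theta s e₀ e₀) u v → theta s u = theta s v) ∧
    (∀ u v q : S, retRel s (theta s e₀ e₀) u v →
      retRel s (theta s e₀ e₀) (theta s q u) (theta s q v)) ∧
    (∃ (T : Type) (π : S → T) (sbar : T × T → T × T),
      Function.Surjective π ∧
      (∀ u v : S, π u = π v ↔ retRel s (theta s e₀ e₀) u v) ∧
      IsPE sbar ∧ Function.Bijective sbar ∧
      (∀ p : S × S, sbar (π p.1, π p.2) = (π (s p).1, π (s p).2))) :=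
  statement11_general s hPE hbij e₀ he₀

end PE
end
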